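/- Let ℓ ≥ 1 and let n satisfy 2·3^ℓ < n < 3^{ℓ+1}. For any I ⊆ {1,2,3}^ℓ with card I = n − 2·3^ℓ, set α_n(I) = ⋃_{σ ∈ {1,2,3}^ℓ \ I} S_σ(α₂) ∪ ⋃_{σ ∈ I} S_σ(α₃), where α₃ = {1/10, 1/2, 9/10}. Then the distortion error of α_n(I) is V(P; α_n(I)) = 75^{−ℓ} ( (3^{ℓ+1} − n)·(821/28125) + (n − 2·3^ℓ)·(1/225) ). -/

import Mathlib

open MeasureTheory Filter
open scoped ENNReal

noncomputable section

/-- The three contractive similarities `S j x = x/5 + 2 j/5` (indexing `j = 0,1,2`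
corresponds to the paper's `j = 1,2,3`). -/
def S (j : Fin 3) : ℝ → ℝ := fun x => x / 5 + 2 * (j : ℝ) / 5

/-- For a word `σ ∈ {1,2,3}^k`, the composition `S_σ = S_{σ 0} ∘ ⋯ ∘ S_{σ (k-1)}`. -/
def Sword {k : ℕ} (σ : Fin k → Fin 3) : ℝ → ℝ :=
  (List.ofFn fun i => S (σ i)).foldr (· ∘ ·) id

/-- The basic interval `J j = S j ([0,1])`. -/
def J (j : Fin 3) : Set ℝ := S j '' Set.Icc 0 1

/-- The interval `J_σ = S_σ([0,1])`. -/
def Jword {k : ℕ} (σ : Fin k → Fin 3) : Set ℝ := Sword σ '' Set.Icc 0 1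

/-- The distortion error `V(P; α) = ∫ min_{a ∈ α} (x - a)^2 dP(x)`. -/
def distortion (P : Measure ℝ) (α : Set ℝ) : ℝ :=
  ∫ x, (⨅ a : α, (x - (a : ℝ)) ^ 2) ∂P

/-- The `n`-th quantization error
`V_n = inf { V(P; α) : α ⊂ ℝ finite, 1 ≤ card α ≤ n }`. -/
def quantErr (P : Measure ℝ) (n : ℕ) : ℝ :=
  sInf {e | ∃ α : Set ℝ, α.Finite ∧ α.Nonempty ∧ α.ncard ≤ n ∧ distortion P α = e}

/-- The self-similarity equation `P = (1/3)(P∘S₁⁻¹ + P∘S₂⁻¹ + P∘S₃⁻¹)`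
characterizing the standard triadic Cantor distribution. -/
def IsTriadicCantor (P : Measure ℝ) : Prop :=
  P = (3 : ℝ≥0∞)⁻¹ • (P.map (S 0) + P.map (S 1) + P.map (S 2))

open Set Topology

/-!
Points of the cylinder `S_σ([0,1])` of level `ℓ` are at distance at least `5^(-ℓ)` from every
other cylinder of the same level, but within `5^(-ℓ)` of any nonempty set `S_σ(β)` with
`β ⊆ [0,1]`. Since `P` lives on `[0,1]`, each cylinder therefore only sees its own codebook, and
self-similarity (mass `3^(-ℓ)`, squared scale `25^(-ℓ)`) gives
`V(P; ⋃_σ S_σ(β_σ)) = 75^(-ℓ) ∑_σ V(P; β_σ)`. The errors `V(P; α₂)` and `V(P; α₃)` are computed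
by subdividing `[0,1]` until each piece has a single nearest codepoint; what is left are integrals
of squares of affine maps, i.e. the moments `∫ x dP = 1/2` and `∫ x² dP = 13/36`.
-/

lemma continuous_S (j : Fin 3) : Continuous (S j) := by
  unfold S; fun_prop

lemma S_mapsTo_Icc (j : Fin 3) : MapsTo (S j) (Icc 0 1) (Icc 0 1) := by
  intro x ⟨hx0, hx1⟩
  have hj : (j : ℝ) ≤ 2 := by exact_mod_cast Nat.le_of_lt_succ j.isLt
  constructor <;> simp only [S] <;> linarith [(Nat.cast_nonneg j : (0 : ℝ) ≤ j)]

lemma inv_five_le_abs_S_sub_S {i j : Fin 3} (hij : i ≠ j) {x y : ℝ} (hx : x ∈ Icc (0 : ℝ) 1)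
    (hy : y ∈ Icc (0 : ℝ) 1) : 5⁻¹ ≤ |S i x - S j y| := by
  obtain ⟨hx0, hx1⟩ := hx
  obtain ⟨hy0, hy1⟩ := hy
  fin_cases i <;> fin_cases j <;> simp_all [S, le_abs] <;>
    first | (left; linarith) | (right; linarith)

lemma Sword_succ {k : ℕ} (σ : Fin (k + 1) → Fin 3) : Sword σ = S (σ 0) ∘ Sword (Fin.tail σ) := by
  unfold Sword
  rw [List.ofFn_succ]
  rfl

lemma Sword_cons {k : ℕ} (j : Fin 3) (τ : Fin k → Fin 3) :
    Sword (Fin.cons j τ : Fin (k + 1) → Fin 3) = S j ∘ Sword τ := by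
  rw [Sword_succ, Fin.cons_zero, Fin.tail_cons]

lemma continuous_Sword {k : ℕ} (σ : Fin k → Fin 3) : Continuous (Sword σ) := by
  induction k with
  | zero => exact continuous_id
  | succ k ih => rw [Sword_succ]; exact (continuous_S _).comp (ih _)

lemma Sword_mapsTo_Icc {k : ℕ} (σ : Fin k → Fin 3) : MapsTo (Sword σ) (Icc 0 1) (Icc 0 1) := by
  induction k with
  | zero => exact mapsTo_id _
  | succ k ih => rw [Sword_succ]; exact (S_mapsTo_Icc _).comp (ih _)

lemma Sword_sub_Sword {k : ℕ} (σ : Fin k → Fin 3) (x y : ℝ) :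
    Sword σ x - Sword σ y = (x - y) / 5 ^ k := by
  induction k generalizing x y with
  | zero => simp [Sword]
  | succ k ih =>
    rw [Sword_succ, Function.comp_apply, Function.comp_apply]
    simp only [S]
    rw [pow_succ, ← div_div, ← ih]
    ring

lemma inv_five_pow_le_abs_Sword_sub_Sword {k : ℕ} {σ τ : Fin k → Fin 3} (hστ : σ ≠ τ) {x y : ℝ}
    (hx : x ∈ Icc (0 : ℝ) 1) (hy : y ∈ Icc (0 : ℝ) 1) :
    (5 ^ k)⁻¹ ≤ |Sword σ x - Sword τ y| := by
  induction k with
  | zero => exact absurd (Subsingleton.elim σ τ) hστ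
  | succ k ih =>
    rw [Sword_succ, Sword_succ, Function.comp_apply, Function.comp_apply]
    by_cases h0 : σ 0 = τ 0
    · have htail : Fin.tail σ ≠ Fin.tail τ := fun h => hστ (by
        rw [← Fin.cons_self_tail σ, ← Fin.cons_self_tail τ, h0, h])
      have hS : S (τ 0) (Sword (Fin.tail σ) x) - S (τ 0) (Sword (Fin.tail τ) y)
          = (Sword (Fin.tail σ) x - Sword (Fin.tail τ) y) / 5 := by simp only [S]; ring
      rw [h0, hS, abs_div, abs_of_pos (by norm_num : (0 : ℝ) < 5), pow_succ, mul_inv]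
      exact div_le_div_of_nonneg_right (ih htail) (by norm_num) |>.trans_eq' (by ring)
    · calc ((5 : ℝ) ^ (k + 1))⁻¹ ≤ 5⁻¹ :=
            inv_anti₀ (by norm_num) (le_self_pow₀ (by norm_num) (Nat.succ_ne_zero k))
        _ ≤ _ := inv_five_le_abs_S_sub_S h0 (Sword_mapsTo_Icc _ hx) (Sword_mapsTo_Icc _ hy)

def minSqDist (α : Set ℝ) (y : ℝ) : ℝ := ⨅ a : α, (y - a) ^ 2

lemma distortion_eq_integral_minSqDist (P : Measure ℝ) (α : Set ℝ) :
    distortion P α = ∫ x, minSqDist α x ∂P := rfl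

lemma minSqDist_le {α : Set ℝ} {a : ℝ} (ha : a ∈ α) (y : ℝ) : minSqDist α y ≤ (y - a) ^ 2 :=
  ciInf_le (⟨0, by rintro _ ⟨b, rfl⟩; positivity⟩ : BddBelow (range fun b : α => (y - b) ^ 2))
    ⟨a, ha⟩

lemma le_minSqDist {α : Set ℝ} (hα : α.Nonempty) {y c : ℝ} (h : ∀ a ∈ α, c ≤ (y - a) ^ 2) :
    c ≤ minSqDist α y :=
  have := hα.to_subtype
  le_ciInf fun a => h a a.2

lemma minSqDist_eq_of_nearest {α : Set ℝ} {a y : ℝ} (ha : a ∈ α)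
    (h : ∀ b ∈ α, (y - a) ^ 2 ≤ (y - b) ^ 2) : minSqDist α y = (y - a) ^ 2 :=
  (minSqDist_le ha y).antisymm (le_minSqDist ⟨a, ha⟩ h)

lemma continuous_minSqDist {α : Set ℝ} (hfin : α.Finite) (hne : α.Nonempty) :
    Continuous (minSqDist α) := by
  have := hfin.fintype
  have := hne.to_subtype
  have h : minSqDist α =
      fun y => Finset.univ.inf' Finset.univ_nonempty fun a : α => (y - (a : ℝ)) ^ 2 := by
    ext y
    rw [Finset.inf'_univ_eq_ciInf]
    rfl
  rw [h]
  exact Continuous.finset_inf'_apply _ fun a _ => by fun_prop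

lemma minSqDist_iUnion_image_Sword {k : ℕ} {β : (Fin k → Fin 3) → Set ℝ}
    (hβ : ∀ σ, β σ ⊆ Icc 0 1) (hne : ∀ σ, (β σ).Nonempty) (σ : Fin k → Fin 3) {x : ℝ}
    (hx : x ∈ Icc (0 : ℝ) 1) :
    minSqDist (⋃ τ, Sword τ '' β τ) (Sword σ x) = (25 ^ k)⁻¹ * minSqDist (β σ) x := by
  have hscale : ∀ y, (Sword σ x - Sword σ y) ^ 2 = (25 ^ k)⁻¹ * (x - y) ^ 2 := fun y => by
    rw [Sword_sub_Sword, div_pow, ← pow_mul, mul_comm, pow_mul]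
    norm_num
    ring
  have hr : (0 : ℝ) ≤ (25 ^ k)⁻¹ := by positivity
  have hmem : ∀ y ∈ β σ, Sword σ y ∈ ⋃ τ, Sword τ '' β τ := fun y hy =>
    mem_iUnion.mpr ⟨σ, y, hy, rfl⟩
  obtain ⟨b₀, hb₀⟩ := hne σ
  apply le_antisymm
  · have := (hne σ).to_subtype
    rw [show minSqDist (β σ) x = ⨅ b : β σ, (x - b) ^ 2 from rfl, Real.mul_iInf_of_nonneg hr]
    exact le_ciInf fun b => hscale b ▸ minSqDist_le (hmem b b.2) _
  · refine le_minSqDist ⟨_, hmem b₀ hb₀⟩ fun a ha => ?_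
    obtain ⟨τ, b, hb, rfl⟩ := mem_iUnion.mp ha
    by_cases hτ : τ = σ
    · subst hτ
      rw [hscale]
      exact mul_le_mul_of_nonneg_left (minSqDist_le hb x) hr
    · have hsep := inv_five_pow_le_abs_Sword_sub_Sword (Ne.symm hτ) hx (hβ τ hb)
      have hb₀1 := hβ σ hb₀
      calc (25 ^ k)⁻¹ * minSqDist (β σ) x ≤ (25 ^ k)⁻¹ * 1 := by
            refine mul_le_mul_of_nonneg_left ((minSqDist_le hb₀ x).trans ?_) hr
            nlinarith [hx.1, hx.2, hb₀1.1, hb₀1.2]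
        _ = ((5 : ℝ) ^ k)⁻¹ ^ 2 := by rw [mul_one, inv_pow, ← pow_mul, mul_comm, pow_mul]; norm_num
        _ ≤ |Sword σ x - Sword τ b| ^ 2 := pow_le_pow_left₀ (by positivity) hsep 2
        _ = _ := sq_abs _

lemma sum_ite_mem_const {ι R : Type*} [Fintype ι] [DecidableEq ι] [Ring R] (s : Finset ι)
    (a b : R) : ∑ i, (if i ∈ s then a else b) = s.card * a + (Fintype.card ι - s.card) * b := by
  rw [← Finset.sum_add_sum_compl s, Finset.sum_congr rfl fun i hi => if_pos hi,
    Finset.sum_congr rfl fun i hi => if_neg (Finset.mem_compl.mp hi), Finset.sum_const,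
    Finset.sum_const, Finset.card_compl, nsmul_eq_mul, nsmul_eq_mul,
    Nat.cast_sub (Finset.card_le_univ s)]

namespace IsTriadicCantor

variable {P : Measure ℝ}

lemma measure_eq (hP : IsTriadicCantor P) {E : Set ℝ} (hE : MeasurableSet E) :
    P E = 3⁻¹ * (P (S 0 ⁻¹' E) + P (S 1 ⁻¹' E) + P (S 2 ⁻¹' E)) := by
  conv_lhs => rw [hP]
  simp only [Measure.smul_apply, Measure.add_apply, smul_eq_mul,
    Measure.map_apply (continuous_S _).measurable hE]

lemma measure_compl_Icc_le (hP : IsTriadicCantor P) (b : ℝ) :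
    P (Icc (-b) (1 + b))ᶜ ≤ P (Icc (-(5 * b)) (1 + 5 * b))ᶜ := by
  have hpre : ∀ j : Fin 3, S j ⁻¹' (Icc (-b) (1 + b))ᶜ ⊆ (Icc (-(5 * b)) (1 + 5 * b))ᶜ := by
    intro j
    rw [preimage_compl, compl_subset_compl]
    intro x ⟨hx0, hx1⟩
    have hj : (j : ℝ) ≤ 2 := by exact_mod_cast Nat.le_of_lt_succ j.isLt
    constructor <;> simp only [S] <;> linarith [(Nat.cast_nonneg j : (0 : ℝ) ≤ j)]
  rw [hP.measure_eq measurableSet_Icc.compl]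
  calc 3⁻¹ * (P (S 0 ⁻¹' _) + P (S 1 ⁻¹' _) + P (S 2 ⁻¹' _))
      ≤ 3⁻¹ * (P (Icc (-(5 * b)) (1 + 5 * b))ᶜ + P (Icc (-(5 * b)) (1 + 5 * b))ᶜ
          + P (Icc (-(5 * b)) (1 + 5 * b))ᶜ) := by
        gcongr <;> exact hpre _
    _ = P (Icc (-(5 * b)) (1 + 5 * b))ᶜ := by
        rw [← two_mul, ← add_one_mul, two_add_one_eq_three, ← mul_assoc,
          ENNReal.inv_mul_cancel (by norm_num) (by norm_num), one_mul]

section Finite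

variable [IsFiniteMeasure P]

lemma measure_compl_Icc_eq_zero (hP : IsTriadicCantor P) {b : ℝ}
    (hb : 0 < b) : P (Icc (-b) (1 + b))ᶜ = 0 := by
  have hgrow : ∀ m : ℕ, P (Icc (-b) (1 + b))ᶜ ≤ P (Icc (-(5 ^ m * b)) (1 + 5 ^ m * b))ᶜ := by
    intro m
    induction m with
    | zero => simp
    | succ m ih =>
      refine ih.trans ((hP.measure_compl_Icc_le _).trans_eq ?_)
      rw [pow_succ', mul_assoc]
  have hlim : Tendsto (fun R : ℝ => P (Icc (-R) (1 + R))ᶜ) atTop (𝓝 0) := by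
    have hanti : Antitone fun R : ℝ => (Icc (-R) (1 + R))ᶜ := fun R R' h =>
      compl_subset_compl.mpr (Icc_subset_Icc (by linarith) (by linarith))
    have hempty : ⋂ R : ℝ, (Icc (-R) (1 + R))ᶜ = ∅ := by
      refine eq_empty_of_forall_notMem fun x hx => ?_
      exact mem_iInter.mp hx |x| ⟨by linarith [neg_abs_le x], by linarith [le_abs_self x]⟩
    simpa [hempty, Function.comp_def] using tendsto_measure_iInter_atTop
      (fun R => measurableSet_Icc.compl.nullMeasurableSet) hanti ⟨0, measure_ne_top P _⟩
  have hpow : Tendsto (fun m : ℕ => 5 ^ m * b) atTop atTop :=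
    (tendsto_pow_atTop_atTop_of_one_lt (by norm_num)).atTop_mul_const hb
  exact le_antisymm (ge_of_tendsto' (hlim.comp hpow) hgrow) zero_le

lemma ae_mem_Icc (hP : IsTriadicCantor P) : ∀ᵐ x ∂P, x ∈ Icc (0 : ℝ) 1 := by
  have hcover : (Icc (0 : ℝ) 1)ᶜ ⊆ ⋃ m : ℕ, (Icc (-(1 / (m + 1) : ℝ)) (1 + 1 / (m + 1)))ᶜ := by
    intro x hx
    have hpos : 0 < max (-x) (x - 1) := by
      simp only [mem_compl_iff, mem_Icc, not_and_or, not_le] at hx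
      rcases hx with hx | hx
      · exact lt_max_of_lt_left (by linarith)
      · exact lt_max_of_lt_right (by linarith)
    obtain ⟨m, hm⟩ := exists_nat_one_div_lt hpos
    refine mem_iUnion.mpr ⟨m, fun ⟨h0, h1⟩ => ?_⟩
    rcases lt_max_iff.mp hm with h | h <;> linarith
  exact measure_mono_null hcover
    (measure_iUnion_null fun m => hP.measure_compl_Icc_eq_zero (by positivity))

lemma integrable_of_continuous (hP : IsTriadicCantor P) {f : ℝ → ℝ} (hf : Continuous f) :
    Integrable f P :=
  (hf.continuousOn.integrableOn_compact isCompact_Icc).integrable_of_ae_notMem_eq_zero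
    (by filter_upwards [hP.ae_mem_Icc] with x hx hx' using absurd hx hx')

lemma integral_eq (hP : IsTriadicCantor P) {f : ℝ → ℝ} (hf : Continuous f) :
    ∫ x, f x ∂P = 3⁻¹ * (∫ x, f (S 0 x) ∂P + ∫ x, f (S 1 x) ∂P + ∫ x, f (S 2 x) ∂P) := by
  have hint : ∀ j, Integrable f (P.map (S j)) := fun j =>
    (integrable_map_measure hf.aestronglyMeasurable (continuous_S j).aemeasurable).mpr
      (hP.integrable_of_continuous (hf.comp (continuous_S j)))
  have hmap : ∀ j, ∫ x, f x ∂(P.map (S j)) = ∫ x, f (S j x) ∂P := fun j =>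
    integral_map (continuous_S j).aemeasurable hf.aestronglyMeasurable
  conv_lhs => rw [hP]
  rw [integral_smul_measure, integral_add_measure ((hint 0).add_measure (hint 1)) (hint 2),
    integral_add_measure (hint 0) (hint 1), hmap, hmap, hmap, ENNReal.toReal_inv, smul_eq_mul]
  norm_num

lemma integral_eq_sum_Sword (hP : IsTriadicCantor P) (k : ℕ) {f : ℝ → ℝ} (hf : Continuous f) :
    ∫ x, f x ∂P = (3 ^ k)⁻¹ * ∑ σ : Fin k → Fin 3, ∫ x, f (Sword σ x) ∂P := by
  induction k generalizing f with
  | zero => simp [Sword]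
  | succ k ih =>
    rw [← (Fin.consEquiv fun _ : Fin (k + 1) => Fin 3).sum_comp, Fintype.sum_prod_type,
      Fin.sum_univ_three]
    simp only [Fin.consEquiv, Equiv.coe_fn_mk, Sword_cons, Function.comp_apply]
    have hS : ∀ j, ∫ x, f (S j x) ∂P
        = (3 ^ k)⁻¹ * ∑ τ : Fin k → Fin 3, ∫ x, f (S j (Sword τ x)) ∂P :=
      fun j => ih (f := fun x => f (S j x)) (hf.comp (continuous_S j))
    rw [hP.integral_eq hf, hS, hS, hS]
    ring

theorem distortion_iUnion_image_Sword (hP : IsTriadicCantor P) {k : ℕ}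
    {β : (Fin k → Fin 3) → Set ℝ} (hfin : ∀ σ, (β σ).Finite) (hne : ∀ σ, (β σ).Nonempty)
    (hβ : ∀ σ, β σ ⊆ Icc 0 1) :
    distortion P (⋃ σ, Sword σ '' β σ) = (75 ^ k)⁻¹ * ∑ σ, distortion P (β σ) := by
  have hcont : Continuous (minSqDist (⋃ σ, Sword σ '' β σ)) :=
    continuous_minSqDist (finite_iUnion fun σ => (hfin σ).image _)
      ⟨_, mem_iUnion.mpr ⟨0, (hne 0).some, (hne 0).some_mem, rfl⟩⟩
  have hcell : ∀ σ, ∫ x, minSqDist (⋃ τ, Sword τ '' β τ) (Sword σ x) ∂P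
      = (25 ^ k)⁻¹ * distortion P (β σ) := fun σ => by
    rw [distortion_eq_integral_minSqDist, ← integral_const_mul]
    refine integral_congr_ae ?_
    filter_upwards [hP.ae_mem_Icc] with x hx
    exact minSqDist_iUnion_image_Sword hβ hne σ hx
  rw [distortion_eq_integral_minSqDist, hP.integral_eq_sum_Sword k hcont]
  simp only [hcell, ← Finset.mul_sum, ← mul_assoc, ← mul_inv, ← mul_pow]
  norm_num


end Finite

section Probability

variable [IsProbabilityMeasure P]

lemma integral_quadratic (hP : IsTriadicCantor P) (a b c : ℝ) :
    ∫ x, (a * x ^ 2 + b * x + c) ∂P = a * ∫ x, x ^ 2 ∂P + b * ∫ x, x ∂P + c := by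
  have hsq : Integrable (fun x => a * x ^ 2) P :=
    (hP.integrable_of_continuous (continuous_pow 2)).const_mul a
  have hid : Integrable (fun x => b * x) P :=
    (hP.integrable_of_continuous continuous_id).const_mul b
  have hlin : Integrable (fun x => a * x ^ 2 + b * x) P := hsq.add hid
  rw [integral_add hlin (integrable_const c), integral_add hsq hid, integral_const_mul,
    integral_const_mul, integral_const, probReal_univ, one_smul]

lemma integral_id (hP : IsTriadicCantor P) : ∫ x, x ∂P = 1 / 2 := by
  have h := hP.integral_eq (f := fun x => x) continuous_id
  have hS : ∀ j : Fin 3, ∫ x, S j x ∂P = 1 / 5 * ∫ x, x ∂P + 2 * j / 5 := fun j => by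
    have hq := hP.integral_quadratic 0 (1 / 5) (2 * j / 5)
    simp only [zero_mul, zero_add] at hq
    rw [← hq]
    congr 1 with x
    simp only [S]
    ring
  rw [hS, hS, hS] at h
  norm_num at h
  linarith

lemma integral_sq (hP : IsTriadicCantor P) : ∫ x, x ^ 2 ∂P = 13 / 36 := by
  have h := hP.integral_eq (f := fun x => x ^ 2) (continuous_pow 2)
  have hS : ∀ j : Fin 3,
      ∫ x, S j x ^ 2 ∂P = 1 / 25 * ∫ x, x ^ 2 ∂P + 4 * j / 25 * (1 / 2) + 4 * j ^ 2 / 25 :=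
    fun j => by
      rw [← hP.integral_id, ← hP.integral_quadratic]
      congr 1 with x
      simp only [S]
      ring
  rw [hS, hS, hS] at h
  norm_num at h
  linarith

lemma integral_affine_sq (hP : IsTriadicCantor P) (c d : ℝ) :
    ∫ x, (c * x + d) ^ 2 ∂P = c ^ 2 * (13 / 36) + c * d + d ^ 2 := by
  rw [← hP.integral_sq, show c * d = 2 * c * d * (1 / 2) by ring, ← hP.integral_id,
    ← hP.integral_quadratic]
  congr 1 with x
  ring

lemma integral_minSqDist_of_nearest (hP : IsTriadicCantor P) {α : Set ℝ} {g : ℝ → ℝ}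
    {c d a : ℝ} (hg : ∀ x, g x = c * x + d) (ha : a ∈ α)
    (hnear : ∀ x ∈ Icc (0 : ℝ) 1, ∀ b ∈ α, (g x - a) ^ 2 ≤ (g x - b) ^ 2) :
    ∫ x, minSqDist α (g x) ∂P = c ^ 2 * (13 / 36) + c * (d - a) + (d - a) ^ 2 := by
  rw [← hP.integral_affine_sq]
  refine integral_congr_ae ?_
  filter_upwards [hP.ae_mem_Icc] with x hx
  rw [minSqDist_eq_of_nearest ha (hnear x hx), hg]
  ring

theorem distortion_three_means (hP : IsTriadicCantor P) :
    distortion P {1 / 10, 1 / 2, 9 / 10} = 1 / 225 := by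
  have hcont : Continuous (minSqDist {1 / 10, 1 / 2, 9 / 10}) :=
    continuous_minSqDist (toFinite _) (insert_nonempty _ _)
  have hpiece : ∀ j : Fin 3, ∫ x, minSqDist {1 / 10, 1 / 2, 9 / 10} (S j x) ∂P = 1 / 225 := by
    intro j
    -- the nearest codepoint on `S j [0,1]` is its centre `S j (1/2) = (4j+1)/10`
    rw [hP.integral_minSqDist_of_nearest (c := 1 / 5) (d := 2 * j / 5) (a := (4 * j + 1) / 10)
      (fun x => by simp only [S]; ring)]
    · ring
    · fin_cases j <;> norm_num
    · rintro x ⟨hx0, hx1⟩ b hb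
      simp only [mem_insert_iff, mem_singleton_iff] at hb
      fin_cases j <;> rcases hb with rfl | rfl | rfl <;> norm_num [S] <;> nlinarith
  rw [distortion_eq_integral_minSqDist, hP.integral_eq hcont, hpiece, hpiece, hpiece]
  norm_num

theorem distortion_two_means (hP : IsTriadicCantor P) :
    distortion P {9 / 50, 189 / 250} = 821 / 28125 := by
  have hcont : Continuous (minSqDist {9 / 50, 189 / 250}) :=
    continuous_minSqDist (toFinite _) (insert_nonempty _ _)
  -- the two Voronoi regions meet at `117/250 ∈ S 1 [0,1]`, so only that cell is subdivided again
  have hmiddle := hP.integral_eq (hcont.comp (continuous_S 1))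
  simp only [Function.comp_apply] at hmiddle
  rw [distortion_eq_integral_minSqDist, hP.integral_eq hcont, hmiddle,
    hP.integral_minSqDist_of_nearest (g := S 0) (c := 1 / 5) (d := 0) (a := 9 / 50)
      (fun x => by norm_num [S]; ring) (by simp) ?_,
    hP.integral_minSqDist_of_nearest (g := S 2) (c := 1 / 5) (d := 4 / 5) (a := 189 / 250)
      (fun x => by norm_num [S]; ring) (by simp) ?_,
    hP.integral_minSqDist_of_nearest (g := fun x => S 1 (S 0 x)) (c := 1 / 25) (d := 2 / 5)
      (a := 9 / 50) (fun x => by norm_num [S]; ring) (by simp) ?_,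
    hP.integral_minSqDist_of_nearest (g := fun x => S 1 (S 1 x)) (c := 1 / 25) (d := 12 / 25)
      (a := 189 / 250) (fun x => by norm_num [S]; ring) (by simp) ?_,
    hP.integral_minSqDist_of_nearest (g := fun x => S 1 (S 2 x)) (c := 1 / 25) (d := 14 / 25)
      (a := 189 / 250) (fun x => by norm_num [S]; ring) (by simp) ?_]
  · norm_num
  all_goals
    rintro x ⟨hx0, hx1⟩ b hb
    simp only [mem_insert_iff, mem_singleton_iff] at hb
    rcases hb with rfl | rfl <;> norm_num [S]
    nlinarith

end Probability

end IsTriadicCantor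

theorem stmt11_general (P : Measure ℝ) [IsProbabilityMeasure P] (hP : IsTriadicCantor P)
    (ℓ n : ℕ) (h1 : 2 * 3 ^ ℓ < n)
    (I : Finset (Fin ℓ → Fin 3)) (hI : I.card = n - 2 * 3 ^ ℓ) :
    distortion P
        ((⋃ σ ∈ ({σ | σ ∉ I} : Set (Fin ℓ → Fin 3)),
            Sword σ '' ({9 / 50, 189 / 250} : Set ℝ)) ∪
          ⋃ σ ∈ I, Sword σ '' ({1 / 10, 1 / 2, 9 / 10} : Set ℝ))
      = ((75 : ℝ) ^ ℓ)⁻¹ *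
          (((3 ^ (ℓ + 1) : ℝ) - n) * (821 / 28125) +
            ((n : ℝ) - 2 * 3 ^ ℓ) * (1 / 225)) := by
  let β σ : Set ℝ := if σ ∈ I then {1 / 10, 1 / 2, 9 / 10} else {9 / 50, 189 / 250}
  have hcodebook : (⋃ σ ∈ ({σ | σ ∉ I} : Set (Fin ℓ → Fin 3)),
      Sword σ '' ({9 / 50, 189 / 250} : Set ℝ)) ∪
      ⋃ σ ∈ I, Sword σ '' ({1 / 10, 1 / 2, 9 / 10} : Set ℝ) = ⋃ σ, Sword σ '' β σ := by
    rw [iUnion_congr fun σ => apply_ite (Sword σ '' ·) _ _ _, iUnion_ite, union_comm]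
    rfl
  have hcard : (I.card : ℝ) = n - 2 * 3 ^ ℓ := by
    rw [hI, Nat.cast_sub h1.le]
    push_cast
    ring
  rw [hcodebook, hP.distortion_iUnion_image_Sword
    (fun σ => by unfold β; split_ifs <;> exact toFinite _)
    (fun σ => by unfold β; split_ifs <;> exact insert_nonempty _ _)
    (fun σ => by unfold β; split_ifs <;> norm_num [insert_subset_iff])]
  simp only [β, apply_ite (distortion P), hP.distortion_two_means, hP.distortion_three_means,
    sum_ite_mem_const, hcard, Fintype.card_fun, Fintype.card_fin]
  push_cast
  ring

theorem stmt11 (P : Measure ℝ) [IsProbabilityMeasure P] (hP : IsTriadicCantor P)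
    (ℓ n : ℕ) (hℓ : 1 ≤ ℓ) (h1 : 2 * 3 ^ ℓ < n) (h2 : n < 3 ^ (ℓ + 1))
    (I : Finset (Fin ℓ → Fin 3)) (hI : I.card = n - 2 * 3 ^ ℓ) :
    distortion P
        ((⋃ σ ∈ ({σ | σ ∉ I} : Set (Fin ℓ → Fin 3)),
            Sword σ '' ({9 / 50, 189 / 250} : Set ℝ)) ∪
          ⋃ σ ∈ I, Sword σ '' ({1 / 10, 1 / 2, 9 / 10} : Set ℝ))
      = ((75 : ℝ) ^ ℓ)⁻¹ *
          (((3 ^ (ℓ + 1) : ℝ) - n) * (821 / 28125) +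
            ((n : ℝ) - 2 * 3 ^ ℓ) * (1 / 225)) :=
  stmt11_general P hP ℓ n h1 I hI
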